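/- Let $Z_1,\dots,Z_n$ ($n \geq 3$) be independent standard normal random variables and $\lambda_1 \geq \dots \geq \lambda_n > 0$ with $\sum_{k=1}^n \lambda_k^2 = 1$ and $\lambda_1^2 \geq 1/2$. Then the probability density function $p$ of $W_0 = \lambda_1 Z_1^2 + \dots + \lambda_n Z_n^2$ satisfies $\sup_x p(x) \geq \frac{e^{-2}}{4\sqrt{2\pi}} A_2^{-1/4}$, where $A_2 = \sum_{k=2}^n \lambda_k^2$. -/

import Mathlib

/-!
Write `W₀ = λ₁ Z₁² + R`. As `Var (λₖ Zₖ²) = 2 λₖ²`, Chebyshev keeps `R` within `2 √A₂` of its mean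
with probability at least `1/2`. Independently, `|Z₁| ≤ A₂^{1/4}` forces `λ₁ Z₁² ≤ √A₂` and has
probability at least `2 A₂^{1/4} e^{-1/2} / √(2π)`. So an interval of length `5 √A₂` carries mass
at least `A₂^{1/4} e^{-1/2} / √(2π)`, and `sup p ≥ e^{-1/2} A₂^{-1/4} / (5 √(2π))`, which is at
least `e^{-2} A₂^{-1/4} / (4 √(2π))`.
-/

open MeasureTheory ProbabilityTheory Real
open Set
open scoped NNReal ENNReal

lemma MeasureTheory.withDensity_apply_le_iSup_mul {α : Type*} [MeasurableSpace α] (μ : Measure α)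
    (f : α → ℝ≥0∞) {s : Set α} (hs : MeasurableSet s) :
    μ.withDensity f s ≤ (⨆ x, f x) * μ s := by
  rw [withDensity_apply f hs, ← setLIntegral_const]
  exact lintegral_mono fun x => le_iSup f x

namespace ProbabilityTheory

lemma hasDerivAt_gaussianPDFReal (μ : ℝ) (v : ℝ≥0) (x : ℝ) :
    HasDerivAt (gaussianPDFReal μ v) (-(x - μ) / v * gaussianPDFReal μ v x) x := by
  have hexponent : HasDerivAt (fun y => -(y - μ) ^ 2 / (2 * v)) (-(2 * (x - μ)) / (2 * v)) x := by
    simpa using (((hasDerivAt_id x).sub_const μ).pow 2).neg.div_const (2 * (v : ℝ))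
  refine (hexponent.exp.const_mul (√(2 * π * v))⁻¹).congr_deriv ?_
  rw [gaussianPDFReal]
  ring

lemma integrable_gaussianPDFReal_mul_pow (v : ℝ≥0) (k : ℕ) :
    Integrable fun x => gaussianPDFReal 0 v x * x ^ k := by
  rcases eq_or_ne v 0 with rfl | hv
  · simp [gaussianPDFReal_zero_var]
  have h := (memLp_id_gaussianReal (μ := 0) (v := v) k).integrable_norm_pow'
  rw [gaussianReal_of_var_ne_zero 0 hv, integrable_withDensity_iff_integrable_smul'
    (measurable_gaussianPDF 0 v) (ae_of_all _ fun _ => gaussianPDF_lt_top)] at h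
  refine h.mono' (by fun_prop) (ae_of_all _ fun x => ?_)
  simp [toReal_gaussianPDF, abs_of_nonneg (gaussianPDFReal_nonneg 0 v x)]

/-- Integration by parts against `φ' = -x φ / v`. -/
lemma integral_pow_add_two_gaussianReal (v : ℝ≥0) (k : ℕ) :
    ∫ x, x ^ (k + 2) ∂gaussianReal 0 v = (k + 1) * v * ∫ x, x ^ k ∂gaussianReal 0 v := by
  rcases eq_or_ne v 0 with rfl | hv
  · simp
  simp only [integral_gaussianReal_eq_integral_smul hv, smul_eq_mul]
  set φ := gaussianPDFReal 0 v
  have hderiv : ∀ x, HasDerivAt (fun x => φ x * x ^ (k + 1))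
      ((k + 1) * (φ x * x ^ k) - (φ x * x ^ (k + 2)) / v) x := fun x => by
    refine ((hasDerivAt_gaussianPDFReal 0 v x).mul (hasDerivAt_pow (k + 1) x)).congr_deriv ?_
    push_cast
    ring
  have hzero := integral_eq_zero_of_hasDerivAt_of_integrable hderiv
    (((integrable_gaussianPDFReal_mul_pow v k).const_mul _).sub
      ((integrable_gaussianPDFReal_mul_pow v (k + 2)).div_const _))
    (integrable_gaussianPDFReal_mul_pow v (k + 1))
  rw [integral_sub ((integrable_gaussianPDFReal_mul_pow v k).const_mul _)
    ((integrable_gaussianPDFReal_mul_pow v (k + 2)).div_const _), integral_const_mul,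
    integral_div, sub_eq_zero, eq_comm, div_eq_iff (NNReal.coe_ne_zero.2 hv)] at hzero
  rw [hzero]
  ring

lemma integral_sq_gaussianReal (v : ℝ≥0) : ∫ x, x ^ 2 ∂gaussianReal 0 v = v := by
  simpa using integral_pow_add_two_gaussianReal v 0

lemma integral_pow_four_gaussianReal (v : ℝ≥0) : ∫ x, x ^ 4 ∂gaussianReal 0 v = 3 * v ^ 2 := by
  rw [integral_pow_add_two_gaussianReal v 2, integral_sq_gaussianReal]
  ring

lemma memLp_sq_gaussianReal (v : ℝ≥0) : MemLp (fun x : ℝ => x ^ 2) 2 (gaussianReal 0 v) := by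
  refine (memLp_two_iff_integrable_sq (by fun_prop)).2 <|
    (memLp_id_gaussianReal 4).integrable_norm_pow'.congr (ae_of_all _ fun x => ?_)
  simp [← pow_mul, (by decide : Even 4).pow_abs]

lemma variance_sq_gaussianReal (v : ℝ≥0) : Var[fun x => x ^ 2; gaussianReal 0 v] = 2 * v ^ 2 := by
  rw [variance_eq_sub (memLp_sq_gaussianReal v)]
  simp only [Pi.pow_apply, ← pow_mul]
  rw [integral_pow_four_gaussianReal, integral_sq_gaussianReal]
  ring

lemma two_mul_gaussianPDFReal_le_gaussianReal_Icc (μ : ℝ) (v : ℝ≥0) (a : ℝ) :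
    ENNReal.ofReal (2 * a * gaussianPDFReal μ v (μ + a)) ≤
      gaussianReal μ v (Icc (μ - a) (μ + a)) := by
  rcases eq_or_ne v 0 with rfl | hv
  · simp
  have hpdf : ∀ x ∈ Icc (μ - a) (μ + a),
      ENNReal.ofReal (gaussianPDFReal μ v (μ + a)) ≤ gaussianPDF μ v x := fun x hx => by
    refine ENNReal.ofReal_le_ofReal ?_
    have hsq : (x - μ) ^ 2 ≤ (μ + a - μ) ^ 2 :=
      sq_le_sq' (by linarith [hx.1]) (by linarith [hx.2])
    simp only [gaussianPDFReal]
    gcongr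
  calc ENNReal.ofReal (2 * a * gaussianPDFReal μ v (μ + a))
      = ∫⁻ _ in Icc (μ - a) (μ + a), ENNReal.ofReal (gaussianPDFReal μ v (μ + a)) := by
        rw [setLIntegral_const, Real.volume_Icc,
          ← ENNReal.ofReal_mul (gaussianPDFReal_nonneg _ _ _)]
        congr 1
        ring
    _ ≤ ∫⁻ x in Icc (μ - a) (μ + a), gaussianPDF μ v x :=
        setLIntegral_mono (measurable_gaussianPDF μ v) hpdf
    _ = gaussianReal μ v (Icc (μ - a) (μ + a)) := (gaussianReal_apply μ hv _).symm

section

variable {Ω ι : Type*} [MeasurableSpace Ω] {P : Measure Ω} {X : Ω → ℝ} {Z : ι → Ω → ℝ} {v : ℝ≥0}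

lemma one_sub_le_measure_abs_sub_integral_lt [IsProbabilityMeasure P] (hX : MemLp X 2 P)
    {c : ℝ} (hc : 0 < c) :
    1 - ENNReal.ofReal (Var[X; P] / c ^ 2) ≤ P {ω | |X ω - P[X]| < c} := by
  have hcompl : {ω | |X ω - P[X]| < c}ᶜ = {ω | c ≤ |X ω - P[X]|} := by ext; simp
  rw [tsub_le_iff_right, ← measure_univ (μ := P)]
  calc P univ ≤ P {ω | |X ω - P[X]| < c} + P {ω | |X ω - P[X]| < c}ᶜ :=
        measure_univ_le_add_compl _
    _ ≤ _ := by rw [hcompl]; gcongr; exact meas_ge_le_variance_div_sq hX hc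

lemma IndepFun.measure_abs_sub_lt_mul_measure_le_le {U V : Ω → ℝ} (h : IndepFun U V P)
    (hV : ∀ ω, 0 ≤ V ω) (m c t : ℝ) :
    P {ω | |U ω - m| < c} * P {ω | V ω ≤ t} ≤ P {ω | U ω + V ω ∈ Icc (m - c) (m + c + t)} := by
  calc P {ω | |U ω - m| < c} * P {ω | V ω ≤ t}
      = P (U ⁻¹' {y | |y - m| < c} ∩ V ⁻¹' Iic t) :=
        (h.measure_inter_preimage_eq_mul {y | |y - m| < c} (Iic t)
          (measurableSet_lt (by fun_prop) measurable_const) measurableSet_Iic).symm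
    _ ≤ _ := measure_mono ?_
  rintro ω ⟨hU, hVt⟩
  simp only [mem_preimage, mem_ofPred_eq, abs_lt, mem_Iic] at hU hVt
  exact ⟨by linarith [hV ω], by linarith⟩

lemma HasLaw.memLp_const_mul_sq (hX : HasLaw X (gaussianReal 0 v) P) (c : ℝ) :
    MemLp (fun ω => c * X ω ^ 2) 2 P :=
  ((hX.map_eq ▸ memLp_sq_gaussianReal v).comp_of_map hX.aemeasurable).const_mul c

lemma HasLaw.variance_const_mul_sq (hX : HasLaw X (gaussianReal 0 v) P) (c : ℝ) :
    Var[fun ω => c * X ω ^ 2; P] = c ^ 2 * (2 * v ^ 2) := by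
  rw [variance_const_mul, ← variance_sq_gaussianReal v, ← hX.map_eq,
    variance_map (by fun_prop) hX.aemeasurable]
  rfl

lemma variance_sum_const_mul_sq (hindep : iIndepFun Z P)
    (hZ : ∀ k, HasLaw (Z k) (gaussianReal 0 v) P) (s : Finset ι) (l : ι → ℝ) :
    Var[fun ω => ∑ k ∈ s, l k * Z k ω ^ 2; P] = 2 * v ^ 2 * ∑ k ∈ s, l k ^ 2 := by
  have hpair : Set.Pairwise s fun i j => IndepFun (fun ω => l i * Z i ω ^ 2)
      (fun ω => l j * Z j ω ^ 2) P := fun i _ j _ hij =>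
    (hindep.comp (fun k x => l k * x ^ 2) (fun k => by fun_prop)).indepFun hij
  rw [← Finset.sum_fn, IndepFun.variance_sum (fun k _ => (hZ k).memLp_const_mul_sq (l k)) hpair,
    Finset.mul_sum]
  exact Finset.sum_congr rfl fun k _ => by rw [(hZ k).variance_const_mul_sq]; ring

lemma HasLaw.two_mul_gaussianPDFReal_le_measure_const_mul_sq_le
    (hX : HasLaw X (gaussianReal 0 1) P) {c : ℝ} (hc : c ≤ 1) {t : ℝ} (ht : 0 ≤ t) :
    ENNReal.ofReal (2 * √t * gaussianPDFReal 0 1 √t) ≤ P {ω | c * X ω ^ 2 ≤ t} := by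
  rw [hX.measure_eq (p := fun x => c * x ^ 2 ≤ t) (measurableSet_le (by fun_prop) measurable_const)]
  have hIcc := two_mul_gaussianPDFReal_le_gaussianReal_Icc 0 1 √t
  rw [zero_add, zero_sub] at hIcc
  refine hIcc.trans (measure_mono fun x hx => ?_)
  have hx2 : x ^ 2 ≤ t := by
    simpa [sq_sqrt ht] using sq_le_sq' hx.1 hx.2
  change c * x ^ 2 ≤ t
  nlinarith [sq_nonneg x]

lemma exists_gaussianPDFReal_le_measure_sum_const_mul_sq_mem_Icc [Fintype ι] [DecidableEq ι]
    [IsProbabilityMeasure P] (hindep : iIndepFun Z P)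
    (hZ : ∀ k, HasLaw (Z k) (gaussianReal 0 1) P) {l : ι → ℝ} (hl : ∀ k, 0 ≤ l k) (i : ι)
    (hli : l i ≤ 1) (hA : 0 < ∑ k ∈ Finset.univ.erase i, l k ^ 2) {t : ℝ} (ht : 0 ≤ t) :
    ∃ m, ENNReal.ofReal (√t * gaussianPDFReal 0 1 √t) ≤
      P {ω | ∑ k, l k * Z k ω ^ 2 ∈
        Icc (m - 2 * √(∑ k ∈ Finset.univ.erase i, l k ^ 2))
          (m + 2 * √(∑ k ∈ Finset.univ.erase i, l k ^ 2) + t)} := by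
  set A := ∑ k ∈ Finset.univ.erase i, l k ^ 2
  set Y : ι → Ω → ℝ := fun k ω => l k * Z k ω ^ 2
  set R : Ω → ℝ := fun ω => ∑ k ∈ Finset.univ.erase i, Y k ω
  have hsplit : ∀ ω, ∑ k, l k * Z k ω ^ 2 = R ω + Y i ω := fun ω =>
    (Finset.sum_erase_add _ _ (Finset.mem_univ i)).symm
  have hc : 0 < 2 * √A := by positivity
  have hR : 2⁻¹ ≤ P {ω | |R ω - P[R]| < 2 * √A} := by
    have hvar : Var[R; P] / (2 * √A) ^ 2 = 2⁻¹ := by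
      rw [variance_sum_const_mul_sq hindep hZ, mul_pow, sq_sqrt hA.le, div_eq_iff (by positivity)]
      push_cast
      ring
    have hmem : MemLp R 2 P := by
      have h := memLp_finsetSum' (Finset.univ.erase i) fun k _ => (hZ k).memLp_const_mul_sq (l k)
      rwa [Finset.sum_fn] at h
    simpa [hvar, ENNReal.one_sub_inv_two] using one_sub_le_measure_abs_sub_integral_lt hmem hc
  have hind : IndepFun R (Y i) P := by
    have h := (hindep.comp (fun k x => l k * x ^ 2) fun k => by fun_prop)
      |>.indepFun_finsetSum_of_notMem₀ (fun k => by fun_prop) (Finset.notMem_erase i Finset.univ)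
    rwa [Finset.sum_fn] at h
  refine ⟨P[R], ?_⟩
  calc ENNReal.ofReal (√t * gaussianPDFReal 0 1 √t)
      = 2⁻¹ * ENNReal.ofReal (2 * √t * gaussianPDFReal 0 1 √t) := by
        rw [mul_assoc, ENNReal.ofReal_mul zero_le_two, ← mul_assoc, ENNReal.ofReal_ofNat,
          ENNReal.inv_mul_cancel two_ne_zero ENNReal.ofNat_ne_top, one_mul]
    _ ≤ P {ω | |R ω - P[R]| < 2 * √A} * P {ω | Y i ω ≤ t} :=
        mul_le_mul' hR ((hZ i).two_mul_gaussianPDFReal_le_measure_const_mul_sq_le hli ht)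
    _ ≤ P {ω | R ω + Y i ω ∈ Icc (P[R] - 2 * √A) (P[R] + 2 * √A + t)} :=
        hind.measure_abs_sub_lt_mul_measure_le_le (fun ω => mul_nonneg (hl i) (sq_nonneg _)) _ _ _
    _ = _ := by simp only [hsplit]

end

end ProbabilityTheory

lemma exp_neg_two_mul_rpow_neg_quarter_le {A : ℝ} (hA : 0 < A) (hA1 : A ≤ 1) :
    exp (-2) / (4 * √(2 * π)) * A ^ (-(1 / 4 : ℝ)) * (5 * √A) ≤
      √√A * gaussianPDFReal 0 1 √√A := by
  set a := √√A
  have ha : 0 < a := by positivity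
  have hA_eq : A = a ^ 4 := by
    rw [show 4 = 2 * 2 from rfl, pow_mul, sq_sqrt (sqrt_nonneg _), sq_sqrt hA.le]
  have hrpow : A ^ (-(1 / 4 : ℝ)) = a⁻¹ := by
    rw [hA_eq, ← rpow_natCast, ← rpow_mul ha.le, ← rpow_neg_one]
    norm_num
  have hsqrt : √A = a ^ 2 := (sq_sqrt (sqrt_nonneg A)).symm
  have hexp : 5 / 4 * exp (-2) ≤ exp (-(a ^ 2 / 2)) := by
    have h := add_one_le_exp (3 / 2)
    have h2 : exp (-(1 / 2)) = exp (-2) * exp (3 / 2) := by rw [← exp_add]; norm_num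
    have h3 : exp (-(1 / 2)) ≤ exp (-(a ^ 2 / 2)) := exp_le_exp.2 (by nlinarith)
    nlinarith [exp_pos (-2)]
  have hpdf : gaussianPDFReal 0 1 a = exp (-(a ^ 2 / 2)) / √(2 * π) := by
    simp only [gaussianPDFReal, NNReal.coe_one, mul_one, sub_zero, neg_div]
    ring
  calc exp (-2) / (4 * √(2 * π)) * A ^ (-(1 / 4 : ℝ)) * (5 * √A)
      = 5 / 4 * exp (-2) * a / √(2 * π) := by
        rw [hrpow, hsqrt]
        field_simp
    _ ≤ exp (-(a ^ 2 / 2)) * a / √(2 * π) := by gcongr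
    _ = a * gaussianPDFReal 0 1 a := by rw [hpdf]; ring

theorem max_density_ge_of_large_first_weight_general
    {Ω : Type*} [MeasureSpace Ω] [IsProbabilityMeasure (ℙ : Measure Ω)]
    {n : ℕ} (hn3 : 3 ≤ n) (hn : 0 < n) (Z : Fin n → Ω → ℝ) (l : Fin n → ℝ)
    (hpos : ∀ k, 0 < l k)
    (hnorm : ∑ k, (l k) ^ 2 = 1)
    (hindep : iIndepFun Z ℙ)
    (hgauss : ∀ k, Measure.map (Z k) ℙ = gaussianReal 0 1)
    (p : ℝ → ℝ)
    (hp_pdf : Measure.map (fun ω => ∑ k, l k * (Z k ω) ^ 2) ℙ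
        = volume.withDensity (fun x => ENNReal.ofReal (p x))) :
    ENNReal.ofReal
        (Real.exp (-2) / (4 * Real.sqrt (2 * π))
          * (∑ k ∈ Finset.univ.erase ⟨0, hn⟩, (l k) ^ 2) ^ (-(1 / 4 : ℝ)))
      ≤ ⨆ x : ℝ, ENNReal.ofReal (p x) := by
  set i₀ : Fin n := ⟨0, hn⟩
  set A := ∑ k ∈ Finset.univ.erase i₀, l k ^ 2
  have hZ : ∀ k, HasLaw (Z k) (gaussianReal 0 1) ℙ := fun k =>
    ⟨.of_map_ne_zero (hgauss k ▸ IsProbabilityMeasure.ne_zero _), hgauss k⟩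
  have hnorm_split : l i₀ ^ 2 + A = 1 := by
    rw [← hnorm, add_comm]
    exact Finset.sum_erase_add _ _ (Finset.mem_univ i₀)
  have hA : 0 < A := Finset.sum_pos' (fun k _ => sq_nonneg _)
    ⟨⟨1, by omega⟩, by simp [i₀, Fin.ext_iff], pow_pos (hpos _) 2⟩
  have hl₀ : l i₀ ≤ 1 := by nlinarith [hpos i₀]
  obtain ⟨m, hm⟩ := exists_gaussianPDFReal_le_measure_sum_const_mul_sq_mem_Icc hindep hZ
    (fun k => (hpos k).le) i₀ hl₀ hA (sqrt_nonneg A)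
  have hdensity : ℙ ((fun ω => ∑ k, l k * Z k ω ^ 2) ⁻¹' Icc (m - 2 * √A) (m + 2 * √A + √A)) ≤
      (⨆ x, ENNReal.ofReal (p x)) * ENNReal.ofReal (5 * √A) := by
    have hW : AEMeasurable (fun ω => ∑ k, l k * Z k ω ^ 2) ℙ :=
      Finset.aemeasurable_fun_sum _ fun k _ => ((hZ k).aemeasurable.pow_const 2).const_mul _
    rw [← Measure.map_apply_of_aemeasurable hW measurableSet_Icc, hp_pdf]
    refine (withDensity_apply_le_iSup_mul _ _ measurableSet_Icc).trans_eq ?_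
    rw [Real.volume_Icc]
    congr 2
    ring
  refine (ENNReal.mul_le_mul_iff_left (c := ENNReal.ofReal (5 * √A))
    (ENNReal.ofReal_pos.2 (by positivity)).ne' ENNReal.ofReal_ne_top).1 ?_
  calc _ = ENNReal.ofReal (exp (-2) / (4 * √(2 * π)) * A ^ (-(1 / 4 : ℝ)) * (5 * √A)) :=
        (ENNReal.ofReal_mul (by positivity)).symm
    _ ≤ ENNReal.ofReal (√√A * gaussianPDFReal 0 1 √√A) :=
        ENNReal.ofReal_le_ofReal (exp_neg_two_mul_rpow_neg_quarter_le hA (by nlinarith))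
    _ ≤ _ := hm.trans hdensity

/-- If `n ≥ 3`, `λ₁ ≥ ⋯ ≥ λₙ > 0`, `∑ λₖ² = 1` and `λ₁² ≥ 1/2`, then the density `p` of
`W₀ = ∑ λₖ Zₖ²` satisfies `sup p ≥ (e⁻²/(4√(2π))) A₂^{-1/4}` where `A₂ = ∑_{k≥2} λₖ²`. -/
theorem max_density_ge_of_large_first_weight
    {Ω : Type*} [MeasureSpace Ω] [IsProbabilityMeasure (ℙ : Measure Ω)]
    {n : ℕ} (hn3 : 3 ≤ n) (hn : 0 < n) (Z : Fin n → Ω → ℝ) (l : Fin n → ℝ)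
    (hpos : ∀ k, 0 < l k) (hmono : Antitone l)
    (hnorm : ∑ k, (l k) ^ 2 = 1) (hl1 : 1 / 2 ≤ (l ⟨0, hn⟩) ^ 2)
    (hindep : iIndepFun Z ℙ)
    (hgauss : ∀ k, Measure.map (Z k) ℙ = gaussianReal 0 1)
    (p : ℝ → ℝ) (hp_nonneg : ∀ x, 0 ≤ p x)
    (hp_zero : ∀ x ≤ 0, p x = 0)
    (hp_cont : ContinuousOn p (Set.Ioi 0))
    (hp_pdf : Measure.map (fun ω => ∑ k, l k * (Z k ω) ^ 2) ℙ
        = volume.withDensity (fun x => ENNReal.ofReal (p x))) :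
    ENNReal.ofReal
        (Real.exp (-2) / (4 * Real.sqrt (2 * π))
          * (∑ k ∈ Finset.univ.erase ⟨0, hn⟩, (l k) ^ 2) ^ (-(1 / 4 : ℝ)))
      ≤ ⨆ x : ℝ, ENNReal.ofReal (p x) :=
  max_density_ge_of_large_first_weight_general hn3 hn Z l hpos hnorm hindep hgauss p hp_pdf
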